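/- Let p ∈ (1,∞) and δ ≥ 0. There exists a constant c > 0 depending only on p such that for all 3×3 real matrices P, Q and all t ≥ 0 one has both φ'_{|P|}(t) ≤ c·φ'_{|Q|}(t) + φ'_{|P|}(|P−Q|) and φ'_{|P|}(t) ≤ c·( φ'_{|Q|}(t) + φ'_{|Q|}(|P−Q|) ), where |·| denotes the Frobenius norm. -/

import Mathlib

/-- The derivative `φ'(t) = (δ+t)^(p-2)·t` of the N-function `φ = φ_{p,δ}`. -/
noncomputable def phiDeriv (p δ t : ℝ) : ℝ := (δ + t) ^ (p - 2) * t

/-- The shifted derivative `φ'_a(t) = φ'(a+t)·t/(a+t)`. -/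
noncomputable def phiShiftDeriv (p δ a t : ℝ) : ℝ := phiDeriv p δ (a + t) * t / (a + t)

/-- The Frobenius norm of a 3×3 real matrix. -/
noncomputable def frob (P : Matrix (Fin 3) (Fin 3) ℝ) : ℝ :=
  Real.sqrt (∑ i, ∑ j, (P i j) ^ 2)

/-!
With `q = p - 2`, the shifted derivative is `φ'_a(t) = (δ + a + t)^q · t`. Two facts suffice.
For `q > -1` the map `t ↦ (A + t)^q · t` is nondecreasing. And if `|a - b| ≤ s`, the bases
`δ + a + s` and `δ + b + s` agree up to a factor `2`, so `φ'_a(s) ≤ 2^|q| φ'_b(s)`.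
Now let `e = |P - Q| ≥ ||P| - |Q||`. If `e ≤ t`, compare the shifts at `t`; if `t < e`, use
`φ'_{|P|}(t) ≤ φ'_{|P|}(e)` and, for the second estimate, compare the shifts at `e`.
-/

open Real

lemma phiShiftDeriv_eq (p δ : ℝ) {a t : ℝ} (ha : 0 ≤ a) (ht : 0 ≤ t) :
    phiShiftDeriv p δ a t = (δ + a + t) ^ (p - 2) * t := by
  unfold phiShiftDeriv phiDeriv
  rcases (add_nonneg ha ht).eq_or_lt with h | h
  · obtain rfl : t = 0 := by linarith
    simp
  · field_simp
    rw [add_assoc]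

lemma monotoneOn_add_rpow_mul {A q : ℝ} (hA : 0 ≤ A) (hq : -1 < q) :
    MonotoneOn (fun s : ℝ => (A + s) ^ q * s) (Set.Ici 0) := by
  intro s hs t ht hst
  simp only [Set.mem_Ici] at hs ht
  rcases hs.eq_or_lt with rfl | hs
  · simpa using mul_nonneg (rpow_nonneg (by linarith) q) ht
  -- `(A + s)^q · s = (A + s)^(q + 1) · (s / (A + s))`, a product of nondecreasing factors
  have factor (u : ℝ) (hu : 0 < u) : (A + u) ^ q * u = (A + u) ^ (q + 1) * (u / (A + u)) := by
    rw [rpow_add_one (by positivity)]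
    field_simp
  have ht : 0 < t := hs.trans_le hst
  have hfrac : s / (A + s) ≤ t / (A + t) := by
    rw [div_le_div_iff₀ (by positivity) (by positivity)]
    nlinarith
  simp only [factor s hs, factor t ht]
  exact mul_le_mul (rpow_le_rpow (by positivity) (by linarith) (by linarith)) hfrac
    (by positivity) (by positivity)

lemma rpow_le_two_rpow_abs_mul_rpow {X Y : ℝ} (q : ℝ) (hX : 0 < X) (hY : 0 < Y)
    (hXY : X ≤ 2 * Y) (hYX : Y ≤ 2 * X) : X ^ q ≤ 2 ^ |q| * Y ^ q := by
  rcases le_or_gt 0 q with hq | hq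
  · calc X ^ q ≤ (2 * Y) ^ q := rpow_le_rpow hX.le hXY hq
      _ = 2 ^ |q| * Y ^ q := by rw [abs_of_nonneg hq, mul_rpow zero_le_two hY.le]
  · calc X ^ q ≤ (Y / 2) ^ q := rpow_le_rpow_of_nonpos (by positivity) (by linarith) hq.le
      _ = 2 ^ |q| * Y ^ q := by
        rw [abs_of_neg hq, div_rpow hY.le zero_le_two, rpow_neg zero_le_two, div_eq_inv_mul]

lemma phiShiftDeriv_le_of_abs_sub_le (p : ℝ) {δ a b s : ℝ} (hδ : 0 ≤ δ) (ha : 0 ≤ a)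
    (hb : 0 ≤ b) (hab : |a - b| ≤ s) :
    phiShiftDeriv p δ a s ≤ 2 ^ |p - 2| * phiShiftDeriv p δ b s := by
  have hs : 0 ≤ s := (abs_nonneg _).trans hab
  rw [phiShiftDeriv_eq p δ ha hs, phiShiftDeriv_eq p δ hb hs]
  rcases hs.eq_or_lt with rfl | hs
  · simp
  obtain ⟨hab₁, hab₂⟩ := abs_sub_le_iff.mp hab
  rw [← mul_assoc]
  exact mul_le_mul_of_nonneg_right (rpow_le_two_rpow_abs_mul_rpow _ (by positivity)
    (by positivity) (by linarith) (by linarith)) hs.le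

lemma phiShiftDeriv_le_add (p : ℝ) (hp : 1 < p) {δ a b e t : ℝ} (hδ : 0 ≤ δ) (ha : 0 ≤ a)
    (hb : 0 ≤ b) (hab : |a - b| ≤ e) (ht : 0 ≤ t) :
    phiShiftDeriv p δ a t ≤ 2 ^ |p - 2| * phiShiftDeriv p δ b t + phiShiftDeriv p δ a e ∧
    phiShiftDeriv p δ a t ≤
      2 ^ |p - 2| * (phiShiftDeriv p δ b t + phiShiftDeriv p δ b e) := by
  have he : 0 ≤ e := (abs_nonneg _).trans hab
  have hnonneg {c s : ℝ} (hc : 0 ≤ c) (hs : 0 ≤ s) : 0 ≤ phiShiftDeriv p δ c s := by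
    rw [phiShiftDeriv_eq p δ hc hs]
    positivity
  have hbt := hnonneg hb ht
  have hbe := hnonneg hb he
  have hc : 0 < (2 : ℝ) ^ |p - 2| := by positivity
  rcases le_or_gt e t with het | hte
  · have hshift := phiShiftDeriv_le_of_abs_sub_le p hδ ha hb (hab.trans het)
    constructor <;> nlinarith [hnonneg ha he]
  · have hmono : phiShiftDeriv p δ a t ≤ phiShiftDeriv p δ a e := by
      rw [phiShiftDeriv_eq p δ ha ht, phiShiftDeriv_eq p δ ha he]
      exact monotoneOn_add_rpow_mul (by positivity) (by linarith) ht he hte.le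
    have hshift := phiShiftDeriv_le_of_abs_sub_le p hδ ha hb hab
    constructor <;> nlinarith

section Frobenius

attribute [local instance] Matrix.frobeniusNormedAddCommGroup

lemma frob_eq_norm (P : Matrix (Fin 3) (Fin 3) ℝ) : frob P = ‖P‖ := by
  simp only [frob, Matrix.frobenius_norm_def, sqrt_eq_rpow, norm_eq_abs, rpow_two, sq_abs]

lemma abs_frob_sub_frob_le (P Q : Matrix (Fin 3) (Fin 3) ℝ) :
    |frob P - frob Q| ≤ frob (P - Q) := by
  simpa only [frob_eq_norm] using abs_norm_sub_norm_le P Q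

end Frobenius

/-- For `p ∈ (1,∞)` there exists `c > 0` depending only on `p` such that for all
`δ ≥ 0`, all 3×3 real matrices `P, Q` and all `t ≥ 0`:
`φ'_{|P|}(t) ≤ c·φ'_{|Q|}(t) + φ'_{|P|}(|P−Q|)` and
`φ'_{|P|}(t) ≤ c·(φ'_{|Q|}(t) + φ'_{|Q|}(|P−Q|))`. -/
theorem shift_change_deriv (p : ℝ) (hp : 1 < p) :
    ∃ c : ℝ, 0 < c ∧
      ∀ δ : ℝ, 0 ≤ δ → ∀ P Q : Matrix (Fin 3) (Fin 3) ℝ, ∀ t : ℝ, 0 ≤ t →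
        phiShiftDeriv p δ (frob P) t
            ≤ c * phiShiftDeriv p δ (frob Q) t
              + phiShiftDeriv p δ (frob P) (frob (P - Q)) ∧
        phiShiftDeriv p δ (frob P) t
            ≤ c * (phiShiftDeriv p δ (frob Q) t
              + phiShiftDeriv p δ (frob Q) (frob (P - Q))) :=
  ⟨2 ^ |p - 2|, by positivity, fun _ hδ P Q _ ht =>
    phiShiftDeriv_le_add p hp hδ (sqrt_nonneg _) (sqrt_nonneg _) (abs_frob_sub_frob_le P Q) ht⟩
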